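/- arXiv:2605.29117 — 6 statements merged into one kernel-verified Lean document; each statement's English description precedes it below -/
import Mathlib

section
/- Let V₁, V₂, V₃ be finite-dimensional real vector spaces with symmetric nondegenerate bilinear forms, and let L₁ ⊆ V₁ ⊕ V̄₂ and L₂ ⊆ V₂ ⊕ V̄₃ be lagrangian subspaces (where V̄ denotes V with negated form). If the map L₁ × L₂ → V₂ sending ((a,b),(c,d)) to b − c is surjective, then the set-theoretic composition L₂ ∘ L₁ = {(a,d) ∈ V₁ ⊕ V̄₃ : ∃ b ∈ V₂ with (a,b) ∈ L₁ and (b,d) ∈ L₂} is a lagrangian subspace of V₁ ⊕ V̄₃. -/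
/-- Transverse composition of linear lagrangian relations is
lagrangian. -/
theorem stmt4 (V1 V2 V3 : Type*)
    [AddCommGroup V1] [Module ℝ V1] [FiniteDimensional ℝ V1]
    [AddCommGroup V2] [Module ℝ V2] [FiniteDimensional ℝ V2]
    [AddCommGroup V3] [Module ℝ V3] [FiniteDimensional ℝ V3]
    (B1 : V1 →ₗ[ℝ] V1 →ₗ[ℝ] ℝ) (h1s : ∀ x y, B1 x y = B1 y x)
    (h1nd : ∀ x, (∀ y, B1 x y = 0) → x = 0)
    (B2 : V2 →ₗ[ℝ] V2 →ₗ[ℝ] ℝ) (h2s : ∀ x y, B2 x y = B2 y x)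
    (h2nd : ∀ x, (∀ y, B2 x y = 0) → x = 0)
    (B3 : V3 →ₗ[ℝ] V3 →ₗ[ℝ] ℝ) (h3s : ∀ x y, B3 x y = B3 y x)
    (h3nd : ∀ x, (∀ y, B3 x y = 0) → x = 0)
    (L1 : Submodule ℝ (V1 × V2)) (L2 : Submodule ℝ (V2 × V3))
    -- L1 is lagrangian in V1 ⊕ V̄2, L2 is lagrangian in V2 ⊕ V̄3
    (hL1 : ∀ p : V1 × V2, (∀ q ∈ L1, B1 p.1 q.1 - B2 p.2 q.2 = 0) ↔ p ∈ L1)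
    (hL2 : ∀ p : V2 × V3, (∀ q ∈ L2, B2 p.1 q.1 - B3 p.2 q.2 = 0) ↔ p ∈ L2)
    -- transversality
    (htrans : ∀ v : V2, ∃ p ∈ L1, ∃ q ∈ L2, p.2 - q.1 = v) :
    -- the composed relation L2 ∘ L1 is lagrangian in V1 ⊕ V̄3
    ∀ r : V1 × V3,
      (∀ w : V1 × V3, (∃ b, (w.1, b) ∈ L1 ∧ (b, w.2) ∈ L2) →
          B1 r.1 w.1 - B3 r.2 w.2 = 0) ↔ ∃ b, (r.1, b) ∈ L1 ∧ (b, r.2) ∈ L2 := by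
  classical
  intro r
  constructor
  · -- hard direction
    intro h
    -- the difference map T : L1 × L2 → V2
    let T : (L1 × L2) →ₗ[ℝ] V2 :=
      { toFun := fun pq => (pq.1 : V1 × V2).2 - (pq.2 : V2 × V3).1
        map_add' := by intro a b; simp; abel
        map_smul' := by intro c a; simp [smul_sub] }
    have hTsurj : Function.Surjective T := by
      intro v
      obtain ⟨p, hp, q, hq, hpq⟩ := htrans v
      exact ⟨(⟨p, hp⟩, ⟨q, hq⟩), hpq⟩
    -- the functional F on L1 × L2
    let F : (L1 × L2) →ₗ[ℝ] ℝ :=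
      { toFun := fun pq => B1 r.1 (pq.1 : V1 × V2).1 - B3 r.2 (pq.2 : V2 × V3).2
        map_add' := by intro a b; simp; ring
        map_smul' := by intro c a; simp; ring }
    have hker : ∀ pq : L1 × L2, T pq = 0 → F pq = 0 := by
      intro pq hpq
      have hb : (pq.1 : V1 × V2).2 = (pq.2 : V2 × V3).1 := by
        have : (pq.1 : V1 × V2).2 - (pq.2 : V2 × V3).1 = 0 := hpq
        linear_combination (norm := abel) this
      have h1 : ((pq.1 : V1 × V2).1, (pq.1 : V1 × V2).2) ∈ L1 := by
        simpa using pq.1.2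
      have h2 : ((pq.1 : V1 × V2).2, (pq.2 : V2 × V3).2) ∈ L2 := by
        rw [hb]; simpa using pq.2.2
      exact h ((pq.1 : V1 × V2).1, (pq.2 : V2 × V3).2) ⟨(pq.1 : V1 × V2).2, h1, h2⟩
    obtain ⟨s, hs⟩ := T.exists_rightInverse_of_surjective
      (LinearMap.range_eq_top.mpr hTsurj)
    have hFs : ∀ pq : L1 × L2, F (s (T pq)) = F pq := by
      intro pq
      have h0 : T (pq - s (T pq)) = 0 := by
        rw [map_sub]
        have h1 : T (s (T pq)) = T pq := by
          have := LinearMap.congr_fun hs (T pq); simpa using this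
        rw [h1, sub_self]
      have := hker _ h0
      rw [map_sub] at this
      linarith
    set g : V2 →ₗ[ℝ] ℝ := F ∘ₗ s with hgdef
    have hg : ∀ p ∈ L1, ∀ q ∈ L2,
        g (p.2 - q.1) = B1 r.1 p.1 - B3 r.2 q.2 := by
      intro p hp q hq
      exact hFs (⟨p, hp⟩, ⟨q, hq⟩)
    -- realize g as pairing with some b
    set b : V2 := ((LinearMap.BilinForm.toDual B2 ⟨h2nd, fun y hy => h2nd y (fun x => by rw [h2s]; exact hy x)⟩).symm g) with hbdef
    have hb : ∀ u, B2 b u = g u := fun u =>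
      LinearMap.BilinForm.apply_toDual_symm_apply (hB := ⟨h2nd, fun y hy => h2nd y (fun x => by rw [h2s]; exact hy x)⟩) (f := g) (v := u)
    refine ⟨b, ?_, ?_⟩
    · apply (hL1 (r.1, b)).mp
      intro q hq
      have h1 := hg q hq 0 L2.zero_mem
      simp only [Prod.fst_zero, Prod.snd_zero, sub_zero, map_zero] at h1
      have h2 := hb q.2
      simp only
      linarith
    · apply (hL2 (b, r.2)).mp
      intro q hq
      have h1 := hg 0 L1.zero_mem q hq
      simp only [Prod.fst_zero, Prod.snd_zero, zero_sub, map_zero, map_neg] at h1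
      have h2 := hb q.1
      simp only
      linarith
  · rintro ⟨b, hb1, hb2⟩ w ⟨c, hc1, hc2⟩
    have e1 := ((hL1 (r.1, b)).mpr hb1) (w.1, c) hc1
    have e2 := ((hL2 (b, r.2)).mpr hb2) (c, w.2) hc2
    simp only at e1 e2
    linarith
end

section
/- Let 𝔨 be a quadratic Lie algebra, and let W₁, W₂ be finite-dimensional vector spaces with symmetric nondegenerate bilinear forms. Let L₁ ⊆ W₁ ⊕ 𝔨 and L₂ ⊆ W₂ ⊕ 𝔨̄ be lagrangian subspaces, and set L₁ ×_𝔨 L₂ = {((w₁,k),(k,w₂)) : (w₁,k) ∈ L₁, (w₂,k) ∈ L₂}. If the images of the projections L₁ → 𝔨 and L₂ → 𝔨 together span 𝔨, then the projection p: L₁ ×_𝔨 L₂ → W₁ ⊕ W₂ is injective and its image is a lagrangian subspace of W₁ ⊕ W₂. -/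
/-- Fibred product of lagrangian subspaces over a quadratic Lie
algebra 𝔨: if the projections of L₁ and L₂ to 𝔨 jointly span 𝔨, then the
projection of L₁ ×_𝔨 L₂ to W₁ ⊕ W₂ is injective with lagrangian image. -/
theorem stmt5 (k : Type*) [LieRing k] [LieAlgebra ℝ k] [FiniteDimensional ℝ k]
    (Bk : k →ₗ[ℝ] k →ₗ[ℝ] ℝ)
    (hks : ∀ x y, Bk x y = Bk y x)
    (hknd : ∀ x, (∀ y, Bk x y = 0) → x = 0)
    (hkinv : ∀ x y z : k, Bk ⁅x, y⁆ z + Bk y ⁅x, z⁆ = 0)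
    (W1 W2 : Type*)
    [AddCommGroup W1] [Module ℝ W1] [FiniteDimensional ℝ W1]
    [AddCommGroup W2] [Module ℝ W2] [FiniteDimensional ℝ W2]
    (B1 : W1 →ₗ[ℝ] W1 →ₗ[ℝ] ℝ) (h1s : ∀ x y, B1 x y = B1 y x)
    (h1nd : ∀ x, (∀ y, B1 x y = 0) → x = 0)
    (B2 : W2 →ₗ[ℝ] W2 →ₗ[ℝ] ℝ) (h2s : ∀ x y, B2 x y = B2 y x)
    (h2nd : ∀ x, (∀ y, B2 x y = 0) → x = 0)
    (L1 : Submodule ℝ (W1 × k)) (L2 : Submodule ℝ (W2 × k))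
    -- L1 is lagrangian in W1 ⊕ 𝔨, L2 is lagrangian in W2 ⊕ 𝔨̄
    (hL1 : ∀ p : W1 × k, (∀ q ∈ L1, B1 p.1 q.1 + Bk p.2 q.2 = 0) ↔ p ∈ L1)
    (hL2 : ∀ p : W2 × k, (∀ q ∈ L2, B2 p.1 q.1 - Bk p.2 q.2 = 0) ↔ p ∈ L2)
    -- the images of the projections to 𝔨 jointly span 𝔨
    (hspan : Submodule.map (LinearMap.snd ℝ W1 k) L1 ⊔
        Submodule.map (LinearMap.snd ℝ W2 k) L2 = ⊤) :
    -- the projection of L1 ×_𝔨 L2 to W1 ⊕ W2 is injective ...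
    (∀ p q : (W1 × k) × (W2 × k),
        p.1 ∈ L1 → p.2 ∈ L2 → p.1.2 = p.2.2 →
        q.1 ∈ L1 → q.2 ∈ L2 → q.1.2 = q.2.2 →
        (p.1.1, p.2.1) = (q.1.1, q.2.1) → p = q) ∧
    -- ... with lagrangian image in W1 ⊕ W2
    (∀ w : W1 × W2,
        (∀ w' : W1 × W2, (∃ c : k, (w'.1, c) ∈ L1 ∧ (w'.2, c) ∈ L2) →
            B1 w.1 w'.1 + B2 w.2 w'.2 = 0) ↔
          ∃ c : k, (w.1, c) ∈ L1 ∧ (w.2, c) ∈ L2) := by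
  constructor
  · rintro ⟨⟨w1, c⟩, ⟨w2, c2⟩⟩ ⟨⟨v1, d⟩, ⟨v2, d2⟩⟩ hp1 hp2 hpc hq1 hq2 hqc heq
    simp only [Prod.mk.injEq] at hpc hqc heq ⊢
    obtain ⟨h11, h22⟩ := heq
    subst h11; subst h22; subst hpc; subst hqc
    have he1 : ((0 : W1), c - d) ∈ L1 := by
      have := L1.sub_mem hp1 hq1
      simpa using this
    have he2 : ((0 : W2), c - d) ∈ L2 := by
      have := L2.sub_mem hp2 hq2
      simpa using this
    have k1 : ∀ q ∈ L1, Bk (c - d) q.2 = 0 := by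
      intro q hq
      have h0 : B1 (0 : W1) q.1 + Bk (c - d) q.2 = 0 := ((hL1 (0, c - d)).mpr he1) q hq
      rw [map_zero, LinearMap.zero_apply, zero_add] at h0
      exact h0
    have k2 : ∀ q ∈ L2, Bk (c - d) q.2 = 0 := by
      intro q hq
      have h0 : B2 (0 : W2) q.1 - Bk (c - d) q.2 = 0 := ((hL2 (0, c - d)).mpr he2) q hq
      rw [map_zero, LinearMap.zero_apply, zero_sub, neg_eq_zero] at h0
      exact h0
    have hcd : c - d = 0 := by
      apply hknd
      intro y
      have hy : y ∈ (⊤ : Submodule ℝ k) := trivial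
      rw [← hspan] at hy
      obtain ⟨a, ha, b, hb, rfl⟩ := Submodule.mem_sup.mp hy
      obtain ⟨q1, hq1', rfl⟩ := ha
      obtain ⟨q2, hq2', rfl⟩ := hb
      rw [map_add]
      simp only [LinearMap.snd_apply]
      rw [k1 q1 hq1', k2 q2 hq2', add_zero]
    have : c = d := by
      have := sub_eq_zero.mp hcd
      exact this
    exact ⟨⟨rfl, this⟩, rfl, this⟩
  · intro w
    constructor
    · intro h
      set P : Submodule ℝ ((W1 × k) × (W2 × k)) := L1.prod L2 with hP
      set F : ((W1 × k) × (W2 × k)) →ₗ[ℝ] k :=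
        (LinearMap.snd ℝ W1 k).comp (LinearMap.fst ℝ (W1 × k) (W2 × k)) +
          (LinearMap.snd ℝ W2 k).comp (LinearMap.snd ℝ (W1 × k) (W2 × k)) with hF
      set G : ((W1 × k) × (W2 × k)) →ₗ[ℝ] ℝ :=
        (B2 w.2).comp ((LinearMap.fst ℝ W2 k).comp (LinearMap.snd ℝ (W1 × k) (W2 × k))) -
          (B1 w.1).comp ((LinearMap.fst ℝ W1 k).comp (LinearMap.fst ℝ (W1 × k) (W2 × k))) with hG
      set F' : P →ₗ[ℝ] k := F.comp P.subtype with hF'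
      have hFapp : ∀ p : P, F' p = (p : (W1 × k) × (W2 × k)).1.2 + (p : (W1 × k) × (W2 × k)).2.2 := by
        intro p; rfl
      have hGapp : ∀ p : (W1 × k) × (W2 × k),
          G p = B2 w.2 p.2.1 - B1 w.1 p.1.1 := by
        intro p; rfl
      have hsurj : LinearMap.range F' = ⊤ := by
        rw [LinearMap.range_eq_top]
        intro y
        have hy : y ∈ (⊤ : Submodule ℝ k) := trivial
        rw [← hspan] at hy
        obtain ⟨a, ha, b, hb, rfl⟩ := Submodule.mem_sup.mp hy
        obtain ⟨q1, hq1', rfl⟩ := ha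
        obtain ⟨q2, hq2', rfl⟩ := hb
        exact ⟨⟨(q1, q2), ⟨hq1', hq2'⟩⟩, rfl⟩
      have hker : ∀ p : P, F' p = 0 → G (P.subtype p) = 0 := by
        rintro ⟨⟨q1, q2⟩, hq1', hq2'⟩ hFp
        rw [hFapp] at hFp
        have hq12 : q1.2 = -q2.2 := by
          simpa [eq_neg_iff_add_eq_zero] using hFp
        have hm2 : ((-q2.1 : W2), q1.2) ∈ L2 := by
          have : ((-q2.1 : W2), q1.2) = -q2 := by
            rw [hq12]; rfl
          rw [this]
          exact L2.neg_mem hq2'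
        have h3 : B1 w.1 q1.1 + B2 w.2 (-q2.1) = 0 := h (q1.1, -q2.1) ⟨q1.2, hq1', hm2⟩
        rw [map_neg] at h3
        show B2 w.2 q2.1 - B1 w.1 q1.1 = 0
        linarith
      obtain ⟨s, hs⟩ := F'.exists_rightInverse_of_surjective hsurj
      set φ : k →ₗ[ℝ] ℝ := G.comp (P.subtype.comp s) with hφ'
      have hφ : ∀ p : P, φ (F' p) = G (P.subtype p) := by
        intro p
        have h1 : F' (s (F' p) - p) = 0 := by
          have h2 := LinearMap.congr_fun hs (F' p)
          simp only [LinearMap.coe_comp, Function.comp_apply, LinearMap.id_coe, id_eq] at h2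
          rw [map_sub, h2, sub_self]
        have h2 := hker _ h1
        rw [map_sub, map_sub, sub_eq_zero] at h2
        exact h2
      have hnd : LinearMap.BilinForm.Nondegenerate Bk :=
        ⟨hknd, fun y hy => hknd y (fun x => by rw [hks]; exact hy x)⟩
      set c : k := (LinearMap.BilinForm.toDual Bk hnd).symm φ with hcdef
      have hc : ∀ y, Bk c y = φ y := by
        intro y
        have h1 : (LinearMap.BilinForm.toDual Bk hnd) c y = Bk c y :=
          LinearMap.BilinForm.toDual_def hnd
        rw [← h1, hcdef, LinearEquiv.apply_symm_apply]
      refine ⟨c, ?_, ?_⟩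
      · apply (hL1 (w.1, c)).mp
        intro q hq
        have h4 := hφ ⟨(q, 0), ⟨hq, L2.zero_mem⟩⟩
        rw [hFapp, hGapp] at h4
        simp only [Submodule.coe_subtype, Prod.snd_zero, Prod.fst_zero, add_zero,
          map_zero, zero_sub] at h4
        show B1 w.1 q.1 + Bk c q.2 = 0
        rw [hc]
        linarith
      · apply (hL2 (w.2, c)).mp
        intro q hq
        have h4 := hφ ⟨(0, q), ⟨L1.zero_mem, hq⟩⟩
        rw [hFapp, hGapp] at h4
        simp only [Submodule.coe_subtype, Prod.snd_zero, Prod.fst_zero, zero_add,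
          map_zero, sub_zero] at h4
        show B2 w.2 q.1 - Bk c q.2 = 0
        rw [hc]
        linarith
    · rintro ⟨c, h1, h2⟩ w' ⟨c', h1', h2'⟩
      have A := ((hL1 (w.1, c)).mpr h1) (w'.1, c') h1'
      have B := ((hL2 (w.2, c)).mpr h2) (w'.2, c') h2'
      simp only at A B ⊢
      linarith
end

section
/- Let V₁, V₂, V₃ be vector spaces with symmetric nondegenerate bilinear forms and let L₁ ⊆ V₁ ⊕ V̄₂, L₂ ⊆ V₂ ⊕ V̄₃ be lagrangian subspaces such that the map L₁ × L₂ → V₂, ((a,b),(c,d)) ↦ b − c, is surjective. Then dim(L₁ ×_{V₂} L₂) = dim(L₂ ∘ L₁), where L₁ ×_{V₂} L₂ = {((a,b),(b,d)) : (a,b) ∈ L₁, (b,d) ∈ L₂} and L₂ ∘ L₁ is the composed relation; equivalently, the projection L₁ ×_{V₂} L₂ → L₂ ∘ L₁ is a linear isomorphism. -/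
/-!
If `((a, b), (b, d))` and `((a, c), (c, d))` both lie in `L₁ ×_{V₂} L₂`, then `(0, b - c) ∈ L₁` and
`(b - c, 0) ∈ L₂`. Isotropy of `L₁` makes `b - c` orthogonal to the second components of `L₁`, and
isotropy of `L₂` makes it orthogonal to the first components of `L₂`. By transversality these
differences span `V₂`, so `b - c` lies in the kernel of the nondegenerate form `B₂`.
-/

namespace LinearMap

variable {R V₁ V₂ V₃ : Type*} [CommRing R]
  [AddCommGroup V₁] [Module R V₁] [AddCommGroup V₂] [Module R V₂] [AddCommGroup V₃] [Module R V₃]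

/-- `L ⊆ V₁ ⊕ V̄₂` is isotropic for the form `B₁ ⊕ (-B₂)`. -/
def IsIsotropicRel (B₁ : V₁ →ₗ[R] V₁ →ₗ[R] R) (B₂ : V₂ →ₗ[R] V₂ →ₗ[R] R)
    (L : Submodule R (V₁ × V₂)) : Prop :=
  ∀ p ∈ L, ∀ q ∈ L, B₁ p.1 q.1 - B₂ p.2 q.2 = 0

namespace IsIsotropicRel

variable {B₁ : V₁ →ₗ[R] V₁ →ₗ[R] R} {B₂ : V₂ →ₗ[R] V₂ →ₗ[R] R} {L : Submodule R (V₁ × V₂)}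

theorem apply_snd_eq_zero (hL : IsIsotropicRel B₁ B₂ L) {v : V₂} (hv : ((0 : V₁), v) ∈ L)
    {q : V₁ × V₂} (hq : q ∈ L) : B₂ v q.2 = 0 := by
  simpa using hL _ hv q hq

theorem apply_fst_eq_zero (hL : IsIsotropicRel B₁ B₂ L) {v : V₁} (hv : (v, (0 : V₂)) ∈ L)
    {q : V₁ × V₂} (hq : q ∈ L) : B₁ v q.1 = 0 := by
  simpa using hL _ hv q hq

end IsIsotropicRel

variable {B₁ : V₁ →ₗ[R] V₁ →ₗ[R] R} {B₂ : V₂ →ₗ[R] V₂ →ₗ[R] R} {B₃ : V₃ →ₗ[R] V₃ →ₗ[R] R}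
  {L₁ : Submodule R (V₁ × V₂)} {L₂ : Submodule R (V₂ × V₃)}

theorem eq_zero_of_mem_of_transverse (hB₂ : B₂.SeparatingLeft)
    (hL₁ : IsIsotropicRel B₁ B₂ L₁) (hL₂ : IsIsotropicRel B₂ B₃ L₂)
    (htrans : ∀ v : V₂, ∃ p ∈ L₁, ∃ q ∈ L₂, p.2 - q.1 = v)
    {v : V₂} (hv₁ : ((0 : V₁), v) ∈ L₁) (hv₂ : (v, (0 : V₃)) ∈ L₂) : v = 0 := by
  refine hB₂ v fun w ↦ ?_
  obtain ⟨p, hp, q, hq, rfl⟩ := htrans w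
  rw [map_sub, hL₁.apply_snd_eq_zero hv₁ hp, hL₂.apply_fst_eq_zero hv₂ hq, sub_zero]

theorem eq_of_mem_of_transverse (hB₂ : B₂.SeparatingLeft)
    (hL₁ : IsIsotropicRel B₁ B₂ L₁) (hL₂ : IsIsotropicRel B₂ B₃ L₂)
    (htrans : ∀ v : V₂, ∃ p ∈ L₁, ∃ q ∈ L₂, p.2 - q.1 = v)
    {a : V₁} {b c : V₂} {d : V₃} (hab : (a, b) ∈ L₁) (hbd : (b, d) ∈ L₂)
    (hac : (a, c) ∈ L₁) (hcd : (c, d) ∈ L₂) : b = c := by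
  refine sub_eq_zero.mp (eq_zero_of_mem_of_transverse hB₂ hL₁ hL₂ htrans ?_ ?_)
  · simpa using L₁.sub_mem hab hac
  · simpa using L₂.sub_mem hbd hcd

end LinearMap

theorem stmt6_general (V1 V2 V3 : Type*)
    [AddCommGroup V1] [Module ℝ V1]
    [AddCommGroup V2] [Module ℝ V2]
    [AddCommGroup V3] [Module ℝ V3]
    (B1 : V1 →ₗ[ℝ] V1 →ₗ[ℝ] ℝ)
    (B2 : V2 →ₗ[ℝ] V2 →ₗ[ℝ] ℝ)
    (h2nd : ∀ x, (∀ y, B2 x y = 0) → x = 0)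
    (B3 : V3 →ₗ[ℝ] V3 →ₗ[ℝ] ℝ)
    (L1 : Submodule ℝ (V1 × V2)) (L2 : Submodule ℝ (V2 × V3))
    (hL1 : ∀ p : V1 × V2, (∀ q ∈ L1, B1 p.1 q.1 - B2 p.2 q.2 = 0) ↔ p ∈ L1)
    (hL2 : ∀ p : V2 × V3, (∀ q ∈ L2, B2 p.1 q.1 - B3 p.2 q.2 = 0) ↔ p ∈ L2)
    (htrans : ∀ v : V2, ∃ p ∈ L1, ∃ q ∈ L2, p.2 - q.1 = v) :
    -- the projection ((a,b),(b,d)) ↦ (a,d) is injective on L₁ ×_{V₂} L₂ ...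
    (∀ p q : (V1 × V2) × (V2 × V3),
        p.1 ∈ L1 → p.2 ∈ L2 → p.1.2 = p.2.1 →
        q.1 ∈ L1 → q.2 ∈ L2 → q.1.2 = q.2.1 →
        (p.1.1, p.2.2) = (q.1.1, q.2.2) → p = q) ∧
    -- ... and surjective onto L₂ ∘ L₁
    (∀ r : V1 × V3, (∃ b : V2, (r.1, b) ∈ L1 ∧ (b, r.2) ∈ L2) ↔
        ∃ p : (V1 × V2) × (V2 × V3),
          p.1 ∈ L1 ∧ p.2 ∈ L2 ∧ p.1.2 = p.2.1 ∧ (p.1.1, p.2.2) = r) := by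
  have hiso₁ : LinearMap.IsIsotropicRel B1 B2 L1 := fun p hp ↦ (hL1 p).mpr hp
  have hiso₂ : LinearMap.IsIsotropicRel B2 B3 L2 := fun p hp ↦ (hL2 p).mpr hp
  refine ⟨?_, fun r ↦ ⟨?_, ?_⟩⟩
  · rintro ⟨⟨a, b⟩, ⟨b', d⟩⟩ ⟨⟨a', c⟩, ⟨c', d'⟩⟩
      hab hbd (rfl : b = b') hac hcd (rfl : c = c') he
    obtain ⟨rfl, rfl⟩ : a = a' ∧ d = d' := Prod.mk.inj he
    obtain rfl := LinearMap.eq_of_mem_of_transverse h2nd hiso₁ hiso₂ htrans hab hbd hac hcd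
    rfl
  · rintro ⟨b, hab, hbd⟩
    exact ⟨((r.1, b), (b, r.2)), hab, hbd, rfl, rfl⟩
  · rintro ⟨⟨⟨a, b⟩, ⟨b', d⟩⟩, hab, hbd, (rfl : b = b'), rfl⟩
    exact ⟨b, hab, hbd⟩

/-- Under the transversality condition, the projection from the
fibred product L₁ ×_{V₂} L₂ onto the composed relation L₂ ∘ L₁ is a linear
isomorphism (injective and surjective onto the composition). -/
theorem stmt6 (V1 V2 V3 : Type*)
    [AddCommGroup V1] [Module ℝ V1] [FiniteDimensional ℝ V1]
    [AddCommGroup V2] [Module ℝ V2] [FiniteDimensional ℝ V2]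
    [AddCommGroup V3] [Module ℝ V3] [FiniteDimensional ℝ V3]
    (B1 : V1 →ₗ[ℝ] V1 →ₗ[ℝ] ℝ) (h1s : ∀ x y, B1 x y = B1 y x)
    (h1nd : ∀ x, (∀ y, B1 x y = 0) → x = 0)
    (B2 : V2 →ₗ[ℝ] V2 →ₗ[ℝ] ℝ) (h2s : ∀ x y, B2 x y = B2 y x)
    (h2nd : ∀ x, (∀ y, B2 x y = 0) → x = 0)
    (B3 : V3 →ₗ[ℝ] V3 →ₗ[ℝ] ℝ) (h3s : ∀ x y, B3 x y = B3 y x)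
    (h3nd : ∀ x, (∀ y, B3 x y = 0) → x = 0)
    (L1 : Submodule ℝ (V1 × V2)) (L2 : Submodule ℝ (V2 × V3))
    (hL1 : ∀ p : V1 × V2, (∀ q ∈ L1, B1 p.1 q.1 - B2 p.2 q.2 = 0) ↔ p ∈ L1)
    (hL2 : ∀ p : V2 × V3, (∀ q ∈ L2, B2 p.1 q.1 - B3 p.2 q.2 = 0) ↔ p ∈ L2)
    (htrans : ∀ v : V2, ∃ p ∈ L1, ∃ q ∈ L2, p.2 - q.1 = v) :
    -- the projection ((a,b),(b,d)) ↦ (a,d) is injective on L₁ ×_{V₂} L₂ ...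
    (∀ p q : (V1 × V2) × (V2 × V3),
        p.1 ∈ L1 → p.2 ∈ L2 → p.1.2 = p.2.1 →
        q.1 ∈ L1 → q.2 ∈ L2 → q.1.2 = q.2.1 →
        (p.1.1, p.2.2) = (q.1.1, q.2.2) → p = q) ∧
    -- ... and surjective onto L₂ ∘ L₁
    (∀ r : V1 × V3, (∃ b : V2, (r.1, b) ∈ L1 ∧ (b, r.2) ∈ L2) ↔
        ∃ p : (V1 × V2) × (V2 × V3),
          p.1 ∈ L1 ∧ p.2 ∈ L2 ∧ p.1.2 = p.2.1 ∧ (p.1.1, p.2.2) = r) :=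
  stmt6_general V1 V2 V3 B1 B2 h2nd B3 L1 L2 hL1 hL2 htrans
end

section
/- Let E be a finite-dimensional vector space with a symmetric nondegenerate bilinear form, let C ⊆ E be a coisotropic subspace (meaning C^⊥ ⊆ C), and let L ⊆ E be a lagrangian subspace. Then the image of (L ∩ C) under the quotient map C → C/C^⊥ is a lagrangian subspace of C/C^⊥ with respect to the induced nondegenerate symmetric form. -/
open LinearMap.BilinForm in
/-- Coisotropic reduction of a lagrangian subspace: the image of
L ∩ C in C/C^⊥ is lagrangian for the induced form. -/
theorem stmt7 (E : Type*) [AddCommGroup E] [Module ℝ E] [FiniteDimensional ℝ E]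
    (B : E →ₗ[ℝ] E →ₗ[ℝ] ℝ)
    (hsymm : ∀ x y, B x y = B y x)
    (hnd : ∀ x, (∀ y, B x y = 0) → x = 0)
    (C : Submodule ℝ E) (Cperp : Submodule ℝ E)
    (hCperp : ∀ x, x ∈ Cperp ↔ ∀ c ∈ C, B x c = 0)
    (hco : Cperp ≤ C)
    (L : Submodule ℝ E)
    (hL : ∀ x, (∀ y ∈ L, B x y = 0) ↔ x ∈ L)
    (Bbar : (C ⧸ Submodule.comap C.subtype Cperp) →
        (C ⧸ Submodule.comap C.subtype Cperp) → ℝ)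
    (hBbar : ∀ x y : C, Bbar (Submodule.Quotient.mk x) (Submodule.Quotient.mk y) = B x y) :
    ∀ z : C ⧸ Submodule.comap C.subtype Cperp,
      (∀ w : C ⧸ Submodule.comap C.subtype Cperp,
          (∃ l : C, (l : E) ∈ L ∧ Submodule.Quotient.mk l = w) → Bbar z w = 0) ↔
        ∃ l : C, (l : E) ∈ L ∧ Submodule.Quotient.mk l = z := by
  have hrefl : LinearMap.IsRefl B := fun x y h => by rw [hsymm]; exact h
  have hnd' : LinearMap.BilinForm.Nondegenerate B := hrefl.nondegenerate_iff_separatingLeft.mpr (fun x h => hnd x h)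
  -- basic facts about orthogonals
  have hmem : ∀ (W : Submodule ℝ E) (x : E), x ∈ LinearMap.BilinForm.orthogonal B W ↔ ∀ y ∈ W, B y x = 0 :=
    fun W x => Iff.rfl
  have hCp : LinearMap.BilinForm.orthogonal B C = Cperp := by
    ext x
    rw [hmem, hCperp]
    exact ⟨fun h c hc => by rw [hsymm]; exact h c hc, fun h c hc => by rw [hsymm]; exact h c hc⟩
  have hLo : LinearMap.BilinForm.orthogonal B L = L := by
    ext x
    rw [hmem, ← hL]
    exact ⟨fun h y hy => by rw [hsymm]; exact h y hy, fun h y hy => by rw [hsymm]; exact h y hy⟩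
  -- orthogonal of a sup
  have hsup : ∀ U V : Submodule ℝ E,
      LinearMap.BilinForm.orthogonal B (U ⊔ V) = LinearMap.BilinForm.orthogonal B U ⊓ LinearMap.BilinForm.orthogonal B V := by
    intro U V
    ext x
    simp only [Submodule.mem_inf, hmem]
    constructor
    · intro h
      exact ⟨fun y hy => h y (Submodule.mem_sup_left hy),
             fun y hy => h y (Submodule.mem_sup_right hy)⟩
    · rintro ⟨h1, h2⟩ y hy
      obtain ⟨u, hu, v, hv, rfl⟩ := Submodule.mem_sup.mp hy
      rw [map_add, LinearMap.add_apply, h1 u hu, h2 v hv, add_zero]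
  have key : LinearMap.BilinForm.orthogonal B (L ⊓ C) = L ⊔ Cperp := by
    have h1 : L ⊓ C = LinearMap.BilinForm.orthogonal B (L ⊔ Cperp) := by
      rw [hsup, hLo, ← hCp, orthogonal_orthogonal hnd' hrefl]
    rw [h1, orthogonal_orthogonal hnd' hrefl]
  intro z
  obtain ⟨c, rfl⟩ := Submodule.Quotient.mk_surjective _ z
  constructor
  · intro H
    have hc : (c : E) ∈ LinearMap.BilinForm.orthogonal B (L ⊓ C) := by
      intro n hn
      show B n (c : E) = 0
      rw [hsymm]
      have := H (Submodule.Quotient.mk ⟨n, hn.2⟩) ⟨⟨n, hn.2⟩, hn.1, rfl⟩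
      rwa [hBbar] at this
    rw [key] at hc
    obtain ⟨l, hl, p, hp, hlp⟩ := Submodule.mem_sup.mp hc
    have hlC : l ∈ C := by
      have : l = (c : E) - p := by rw [← hlp]; abel
      rw [this]; exact Submodule.sub_mem C c.2 (hco hp)
    refine ⟨⟨l, hlC⟩, hl, ?_⟩
    rw [Submodule.Quotient.eq]
    have : ((⟨l, hlC⟩ : C) - c : C) = (⟨l - c, Submodule.sub_mem C hlC c.2⟩ : C) := rfl
    rw [this]
    show (l - (c : E)) ∈ Cperp
    have : l - (c : E) = -p := by rw [← hlp]; abel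
    rw [this]; exact Cperp.neg_mem hp
  · rintro ⟨l, hl, hlz⟩ w ⟨m, hm, rfl⟩
    rw [← hlz, hBbar]
    exact (hL l).mpr hl m hm
end

section
/- Let A → T be a two-term complex of finite-dimensional vector spaces (a: A → T), with A in degree 1 and T in degree 0, and consider the dual complex T* → A* (a*: T* → A*) with T* in degree 1 and A* in degree 0. Let Λ be the chain map from the first complex to the second given by the pair of maps Λ₁ = λ: A → T* and Λ₀ = −λ*: T → A* (using the natural identification), with compatibility a* ∘ λ = −λ* ∘ a as maps A → A*. Then Λ is a quasi-isomorphism if and only if ker(a) ∩ ker(λ) = 0 and dim A = dim T. -/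
open Module LinearMap

private lemma stmt8_mem_ker {A T : Type*}
    [AddCommGroup A] [Module ℝ A] [AddCommGroup T] [Module ℝ T]
    (a : A →ₗ[ℝ] T) (lam : A →ₗ[ℝ] Module.Dual ℝ T)
    (hskew : ∀ u v, lam u (a v) = - lam v (a u))
    {u : A} (hu : a u = 0) : lam u ∈ LinearMap.ker a.dualMap := by
  rw [LinearMap.mem_ker]
  ext v
  simp [hskew u v, hu]

/-- Nondegeneracy criterion for 1-shifted symplectic structures:
the chain map (λ, −λ*) from (A →ᵃ T) to (T* →ᵃ* A*) is a quasi-isomorphism iff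
ker(a) ∩ ker(λ) = 0 and dim A = dim T. -/
theorem stmt8 (A T : Type*)
    [AddCommGroup A] [Module ℝ A] [FiniteDimensional ℝ A]
    [AddCommGroup T] [Module ℝ T] [FiniteDimensional ℝ T]
    (a : A →ₗ[ℝ] T) (lam : A →ₗ[ℝ] Module.Dual ℝ T)
    (hskew : ∀ u v, lam u (a v) = - lam v (a u)) :
    -- quasi-isomorphism: both induced maps on homology are bijective
    (((∀ u, a u = 0 → lam u = 0 → u = 0) ∧
      (∀ ξ : Module.Dual ℝ T, (∀ v, ξ (a v) = 0) → ∃ u, a u = 0 ∧ lam u = ξ)) ∧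
     ((∀ X : T, (∃ ξ : Module.Dual ℝ T, ∀ u, lam u X = ξ (a u)) → ∃ v, a v = X) ∧
      (∀ φ : Module.Dual ℝ A, ∃ (X : T) (ξ : Module.Dual ℝ T),
          ∀ u, φ u = - lam u X + ξ (a u))))
    ↔ ((∀ u, a u = 0 → lam u = 0 → u = 0) ∧
        Module.finrank ℝ A = Module.finrank ℝ T) := by
  -- the induced map ker a → ker a*
  set e : LinearMap.ker a →ₗ[ℝ] LinearMap.ker a.dualMap :=
    LinearMap.codRestrict _ (lam.comp (LinearMap.ker a).subtype)
      (fun x => stmt8_mem_ker a lam hskew x.2) with he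
  have hrank : finrank ℝ (LinearMap.ker a.dualMap) + finrank ℝ (LinearMap.range a)
      = finrank ℝ T := by
    have h1 := LinearMap.finrank_range_add_finrank_ker a.dualMap
    rw [LinearMap.finrank_range_dualMap_eq_finrank_range, Subspace.dual_finrank_eq] at h1
    omega
  have hrankA : finrank ℝ (LinearMap.ker a) + finrank ℝ (LinearMap.range a)
      = finrank ℝ A := by
    have := LinearMap.finrank_range_add_finrank_ker a
    omega
  have hecoe : ∀ x : LinearMap.ker a, ((e x : Module.Dual ℝ T)) = lam x := fun _ => rfl
  have einj_of : (∀ u, a u = 0 → lam u = 0 → u = 0) → Function.Injective e := by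
    intro hinj x y hxy
    have h2 : lam ((x : A) - y) = 0 := by
      rw [map_sub, ← hecoe, ← hecoe, hxy, sub_self]
    have h1 : a ((x : A) - y) = 0 := by
      rw [map_sub, LinearMap.mem_ker.mp x.2, LinearMap.mem_ker.mp y.2, sub_self]
    exact Subtype.ext (sub_eq_zero.mp (hinj _ h1 h2))
  constructor
  · rintro ⟨⟨h1a, h1b⟩, -⟩
    refine ⟨h1a, ?_⟩
    have hbij : Function.Bijective e := by
      refine ⟨einj_of h1a, ?_⟩
      rintro ⟨ξ, hξ⟩
      have hξ' : ∀ v, ξ (a v) = 0 := fun v =>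
        congrFun (congrArg DFunLike.coe (LinearMap.mem_ker.mp hξ)) v
      obtain ⟨u, hu, hlu⟩ := h1b ξ hξ'
      exact ⟨⟨u, hu⟩, Subtype.ext hlu⟩
    have hfr : finrank ℝ (LinearMap.ker a) = finrank ℝ (LinearMap.ker a.dualMap) :=
      (LinearEquiv.ofBijective e hbij).finrank_eq
    omega
  · rintro ⟨hinj, hdim⟩
    have hfr : finrank ℝ (LinearMap.ker a) = finrank ℝ (LinearMap.ker a.dualMap) := by
      omega
    have hesurj : Function.Surjective e :=
      (LinearMap.injective_iff_surjective_of_finrank_eq_finrank (K := ℝ) (V := LinearMap.ker a) (V₂ := LinearMap.ker a.dualMap) hfr).mp (einj_of hinj)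
    have h1b : ∀ ξ : Module.Dual ℝ T, (∀ v, ξ (a v) = 0) → ∃ u, a u = 0 ∧ lam u = ξ := by
      intro ξ hξ
      have hmem : ξ ∈ LinearMap.ker a.dualMap := by
        rw [LinearMap.mem_ker]; ext v; simpa using hξ v
      obtain ⟨u, hu⟩ := hesurj ⟨ξ, hmem⟩
      exact ⟨(u : A), u.2, congrArg Subtype.val hu⟩
    refine ⟨⟨hinj, h1b⟩, ?_, ?_⟩
    · -- injectivity of H0 map
      rintro X ⟨ξ, hξ⟩
      by_contra hX
      have hX' : X ∉ LinearMap.range a := fun ⟨v, hv⟩ => hX ⟨v, hv⟩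
      obtain ⟨η, hηX, hηmap⟩ :=
        Submodule.exists_dual_map_eq_bot_of_notMem (p := LinearMap.range a) hX' inferInstance
      have hη0 : ∀ v, η (a v) = 0 := by
        intro v
        have : η (a v) ∈ (LinearMap.range a).map η := ⟨a v, ⟨v, rfl⟩, rfl⟩
        rw [hηmap] at this
        simpa using this
      obtain ⟨u, hu, hlu⟩ := h1b η hη0
      apply hηX
      rw [← hlu, hξ u, hu, map_zero]
    · -- surjectivity of H0 map
      intro φ
      set g : (T × Module.Dual ℝ T) →ₗ[ℝ] Module.Dual ℝ A :=
        LinearMap.coprod (-lam.flip) a.dualMap with hg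
      have hgsurj : Function.Surjective g := by
        rw [← LinearMap.dualMap_injective_iff]
        rw [injective_iff_map_eq_zero]
        intro Ψ hΨ
        set y := (Module.evalEquiv ℝ A).symm Ψ with hy
        have hΨy : Ψ = Module.evalEquiv ℝ A y := by rw [hy, LinearEquiv.apply_symm_apply]
        have key : ∀ p : T × Module.Dual ℝ T, g p y = 0 := by
          intro p
          have : g.dualMap Ψ p = 0 := by rw [hΨ]; rfl
          rw [LinearMap.dualMap_apply, hΨy] at this
          simpa [Module.evalEquiv] using this
        have hlam : lam y = 0 := by
          ext X
          have := key (X, 0)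
          simpa [hg, neg_eq_zero] using this
        have hay : a y = 0 := by
          rw [← Module.forall_dual_apply_eq_zero_iff ℝ]
          intro ξ
          have := key (0, ξ)
          simpa [hg] using this
        have : y = 0 := hinj y hay hlam
        rw [hΨy, this, map_zero]
      obtain ⟨⟨X, ξ⟩, hXξ⟩ := hgsurj φ
      refine ⟨X, ξ, fun u => ?_⟩
      rw [← hXξ]
      simp [hg]
end

section
/- Let N be a manifold, η ∈ Ω³(N) a closed 3-form, and 𝔨 a quadratic Lie algebra. Then the bundle (TN ⊕ T*N) ⊕ 𝔨_N with anchor the projection to TN, pairing ⟨X₁+α₁+w₁, X₂+α₂+w₂⟩ = i_{X₂}α₁ + i_{X₁}α₂ + ⟨w₁,w₂⟩, and bracket ⟦X₁+α₁+w₁, X₂+α₂+w₂⟧ = [X₁,X₂] + (ℒ_{X₁}α₂ − i_{X₂}dα₁ + i_{X₂}i_{X₁}η + ⟨dw₁, w₂⟩) + (ℒ_{X₁}w₂ − ℒ_{X₂}w₁ + [w₁,w₂]) is a Courant algebroid. -/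
/-!
The bracket is the sum of three pieces: the η-twisted Dorfman bracket on vector fields and
1-forms, the bracket of the semidirect product of vector fields with `𝔨`-valued functions, and the
correction 1-form `⟨dw₁, w₂⟩`. Each axiom is checked componentwise. On 1-forms the Jacobi identity
splits, by additivity of `ℒ_X` and `i_Y d` in the form, into the Jacobi identity of the twisted
Dorfman bracket, which is where `dη = 0` enters, and an identity among the correction terms, which
holds because the Lie derivative on `𝔨`-valued functions is a flat connection by derivations of
both the bracket and the (ad-invariant) pairing.
-/

theorem map_sub_of_map_add {A B : Type*} [AddGroup A] [AddGroup B] {φ : A → B}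
    (h : ∀ a b, φ (a + b) = φ a + φ b) (a b : A) : φ (a - b) = φ a - φ b :=
  map_sub (AddMonoidHom.mk' φ h) a b

theorem map_neg_of_map_add {A B : Type*} [AddGroup A] [AddGroup B] {φ : A → B}
    (h : ∀ a b, φ (a + b) = φ a + φ b) (a : A) : φ (-a) = -φ a :=
  map_neg (AddMonoidHom.mk' φ h) a

theorem add_left_of_symm {A B : Type*} [Add A] [Add B] {P : A → A → B}
    (hsymm : ∀ a b, P a b = P b a) (hadd : ∀ a b c, P a (b + c) = P a b + P a c) (a b c : A) :
    P (a + b) c = P a c + P b c := by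
  rw [hsymm, hadd, hsymm c, hsymm c]

theorem sub_left_of_symm {A B : Type*} [AddGroup A] [AddGroup B] {P : A → A → B}
    (hsymm : ∀ a b, P a b = P b a) (hadd : ∀ a b c, P a (b + c) = P a b + P a c) (a b c : A) :
    P (a - b) c = P a c - P b c :=
  map_sub_of_map_add (φ := (P · c)) (add_left_of_symm hsymm hadd · · c) a b

theorem neg_left_of_symm {A B : Type*} [AddGroup A] [AddGroup B] {P : A → A → B}
    (hsymm : ∀ a b, P a b = P b a) (hadd : ∀ a b c, P a (b + c) = P a b + P a c) (a b : A) :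
    P (-a) b = -P a b :=
  map_neg_of_map_add (φ := (P · b)) (add_left_of_symm hsymm hadd · · b) a

theorem apply_lie_eq_apply_lie_of_invariant {L B : Type*} [LieRing L] [AddCommGroup B]
    {P : L → L → B} (hsymm : ∀ a b, P a b = P b a) (hadd : ∀ a b c, P a (b + c) = P a b + P a c)
    (hinv : ∀ a b c : L, P ⁅a, b⁆ c + P b ⁅a, c⁆ = 0) (a b c : L) : P a ⁅b, c⁆ = P ⁅a, b⁆ c := by
  have h := hinv b a c
  rw [← lie_skew b a, neg_left_of_symm hsymm hadd] at h
  rw [← sub_eq_zero, ← h]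
  abel

namespace ProductCourant

variable {R V K : Type*} [CommRing R] [LieRing V] [LieRing K]
  (act : V → R → R) (LK : V → K → K) (PK : K → K → R) (η : V → V → V → R)

/- In the notation of the paper, `lieDerivForm act X α = ℒ_X α`,
`interiorDiffForm act Y α = i_Y dα` and `pairingDiff LK PK w w' = ⟨dw, w'⟩`; `bracket` and
`pairing` are (prodcour) and (prodpair). -/

def lieDerivForm (X : V) (α : V → R) : V → R := fun Z => act X (α Z) - α ⁅X, Z⁆

def interiorDiffForm (Y : V) (α : V → R) : V → R :=
  fun Z => act Y (α Z) - act Z (α Y) - α ⁅Y, Z⁆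

def twistedDorfmanForm (X : V) (α : V → R) (Y : V) (β : V → R) : V → R :=
  lieDerivForm act X β - interiorDiffForm act Y α + η X Y

def pairingDiff (w w' : K) : V → R := fun Z => PK (LK Z w) w'

def semidirectBracket (X : V) (w : K) (Y : V) (w' : K) : K := LK X w' - LK Y w + ⁅w, w'⁆

def bracket (e e' : V × (V → R) × K) : V × (V → R) × K :=
  (⁅e.1, e'.1⁆, twistedDorfmanForm act η e.1 e.2.1 e'.1 e'.2.1 + pairingDiff LK PK e.2.2 e'.2.2,
    semidirectBracket LK e.1 e.2.2 e'.1 e'.2.2)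

def pairing (e e' : V × (V → R) × K) : R := e.2.1 e'.1 + e'.2.1 e.1 + PK e.2.2 e'.2.2

variable {act LK PK η}

theorem twistedDorfmanForm_add_left
    (hactadd' : ∀ X f g, act X (f + g) = act X f + act X g)
    (X : V) (α α' : V → R) (Y : V) (β : V → R) :
    twistedDorfmanForm act η X (α + α') Y β
      = twistedDorfmanForm act η X α Y β - interiorDiffForm act Y α' := by
  funext Z
  simp only [twistedDorfmanForm, lieDerivForm, interiorDiffForm, Pi.add_apply, Pi.sub_apply,
    hactadd']
  ring

theorem twistedDorfmanForm_add_right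
    (hactadd' : ∀ X f g, act X (f + g) = act X f + act X g)
    (X : V) (α : V → R) (Y : V) (β β' : V → R) :
    twistedDorfmanForm act η X α Y (β + β')
      = twistedDorfmanForm act η X α Y β + lieDerivForm act X β' := by
  funext Z
  simp only [twistedDorfmanForm, lieDerivForm, interiorDiffForm, Pi.add_apply, Pi.sub_apply,
    hactadd']
  ring

theorem twistedDorfmanForm_leibniz
    (hactadd' : ∀ X f g, act X (f + g) = act X f + act X g)
    (hactbr : ∀ (X Y : V) (f : R), act ⁅X, Y⁆ f = act X (act Y f) - act Y (act X f))
    (hηalt1 : ∀ X Y Z, η X Y Z = - η Y X Z) (hηalt2 : ∀ X Y Z, η X Y Z = - η X Z Y)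
    (hηclosed : ∀ X Y Z W,
      act X (η Y Z W) - act Y (η X Z W) + act Z (η X Y W) - act W (η X Y Z)
        - η ⁅X, Y⁆ Z W + η ⁅X, Z⁆ Y W - η ⁅X, W⁆ Y Z
        - η ⁅Y, Z⁆ X W + η ⁅Y, W⁆ X Z - η ⁅Z, W⁆ X Y = 0)
    {α₁ α₂ α₃ : V → R} (hα₁ : ∀ X Y, α₁ (X + Y) = α₁ X + α₁ Y)
    (hα₂ : ∀ X Y, α₂ (X + Y) = α₂ X + α₂ Y) (hα₃ : ∀ X Y, α₃ (X + Y) = α₃ X + α₃ Y)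
    (X₁ X₂ X₃ : V) :
    twistedDorfmanForm act η X₁ α₁ ⁅X₂, X₃⁆ (twistedDorfmanForm act η X₂ α₂ X₃ α₃)
      = twistedDorfmanForm act η ⁅X₁, X₂⁆ (twistedDorfmanForm act η X₁ α₁ X₂ α₂) X₃ α₃
        + twistedDorfmanForm act η X₂ α₂ ⁅X₁, X₃⁆ (twistedDorfmanForm act η X₁ α₁ X₃ α₃) := by
  have hswap (A B C : V) : η A B C = η C A B := by rw [hηalt2, hηalt1, neg_neg]
  funext Z
  simp only [twistedDorfmanForm, lieDerivForm, interiorDiffForm, Pi.add_apply, Pi.sub_apply,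
    hactadd', map_sub_of_map_add (hactadd' _), hactbr, lie_lie, map_sub_of_map_add hα₁,
    map_sub_of_map_add hα₂, map_sub_of_map_add hα₃]
  linear_combination hηclosed X₁ X₂ X₃ Z - hswap X₂ X₃ ⁅X₁, Z⁆ + hηalt1 X₁ ⁅X₂, X₃⁆ Z
    - hswap X₁ X₂ ⁅X₃, Z⁆ + hswap X₁ X₃ ⁅X₂, Z⁆ - hηalt1 X₂ ⁅X₁, X₃⁆ Z

theorem semidirectBracket_leibniz
    (hLKadd : ∀ X w w', LK X (w + w') = LK X w + LK X w')
    (hLKbr : ∀ (X : V) (w w' : K), LK X ⁅w, w'⁆ = ⁅LK X w, w'⁆ + ⁅w, LK X w'⁆)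
    (hLKcomm : ∀ (X Y : V) (w : K), LK ⁅X, Y⁆ w = LK X (LK Y w) - LK Y (LK X w))
    (X₁ X₂ X₃ : V) (w₁ w₂ w₃ : K) :
    semidirectBracket LK X₁ w₁ ⁅X₂, X₃⁆ (semidirectBracket LK X₂ w₂ X₃ w₃)
      = semidirectBracket LK ⁅X₁, X₂⁆ (semidirectBracket LK X₁ w₁ X₂ w₂) X₃ w₃
        + semidirectBracket LK X₂ w₂ ⁅X₁, X₃⁆ (semidirectBracket LK X₁ w₁ X₃ w₃) := by
  simp only [semidirectBracket, hLKadd, map_sub_of_map_add (hLKadd _), hLKcomm, hLKbr, lie_lie,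
    lie_add, add_lie, lie_sub, sub_lie, ← lie_skew w₂ (LK X₃ w₁)]
  abel

theorem pairingDiff_leibniz
    (hLKadd : ∀ X w w', LK X (w + w') = LK X w + LK X w')
    (hLKbr : ∀ (X : V) (w w' : K), LK X ⁅w, w'⁆ = ⁅LK X w, w'⁆ + ⁅w, LK X w'⁆)
    (hLKcomm : ∀ (X Y : V) (w : K), LK ⁅X, Y⁆ w = LK X (LK Y w) - LK Y (LK X w))
    (hPKsymm : ∀ w w', PK w w' = PK w' w)
    (hPKadd : ∀ w w₁ w₂, PK w (w₁ + w₂) = PK w w₁ + PK w w₂)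
    (hPKinv : ∀ w w₁ w₂ : K, PK ⁅w, w₁⁆ w₂ + PK w₁ ⁅w, w₂⁆ = 0)
    (hPKL : ∀ X w w', act X (PK w w') = PK (LK X w) w' + PK w (LK X w'))
    (X₁ X₂ X₃ : V) (w₁ w₂ w₃ : K) :
    lieDerivForm act X₁ (pairingDiff LK PK w₂ w₃)
        + pairingDiff LK PK w₁ (semidirectBracket LK X₂ w₂ X₃ w₃)
      = -interiorDiffForm act X₃ (pairingDiff LK PK w₁ w₂)
          + pairingDiff LK PK (semidirectBracket LK X₁ w₁ X₂ w₂) w₃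
        + (lieDerivForm act X₂ (pairingDiff LK PK w₁ w₃)
          + pairingDiff LK PK w₂ (semidirectBracket LK X₁ w₁ X₃ w₃)) := by
  funext Z
  simp only [lieDerivForm, interiorDiffForm, pairingDiff, semidirectBracket, Pi.add_apply,
    Pi.neg_apply, hPKL, hLKadd, map_sub_of_map_add (hLKadd _), hLKcomm, hLKbr, hPKadd,
    map_sub_of_map_add (hPKadd _), add_left_of_symm hPKsymm hPKadd,
    sub_left_of_symm hPKsymm hPKadd, apply_lie_eq_apply_lie_of_invariant hPKsymm hPKadd hPKinv]
  rw [← lie_skew (LK Z w₂) w₁, neg_left_of_symm hPKsymm hPKadd]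
  linear_combination hPKsymm (LK Z w₂) (LK X₃ w₁)

theorem bracket_leibniz
    (hactadd' : ∀ X f g, act X (f + g) = act X f + act X g)
    (hactbr : ∀ (X Y : V) (f : R), act ⁅X, Y⁆ f = act X (act Y f) - act Y (act X f))
    (hLKadd : ∀ X w w', LK X (w + w') = LK X w + LK X w')
    (hLKbr : ∀ (X : V) (w w' : K), LK X ⁅w, w'⁆ = ⁅LK X w, w'⁆ + ⁅w, LK X w'⁆)
    (hLKcomm : ∀ (X Y : V) (w : K), LK ⁅X, Y⁆ w = LK X (LK Y w) - LK Y (LK X w))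
    (hPKsymm : ∀ w w', PK w w' = PK w' w)
    (hPKadd : ∀ w w₁ w₂, PK w (w₁ + w₂) = PK w w₁ + PK w w₂)
    (hPKinv : ∀ w w₁ w₂ : K, PK ⁅w, w₁⁆ w₂ + PK w₁ ⁅w, w₂⁆ = 0)
    (hPKL : ∀ X w w', act X (PK w w') = PK (LK X w) w' + PK w (LK X w'))
    (hηalt1 : ∀ X Y Z, η X Y Z = - η Y X Z) (hηalt2 : ∀ X Y Z, η X Y Z = - η X Z Y)
    (hηclosed : ∀ X Y Z W,
      act X (η Y Z W) - act Y (η X Z W) + act Z (η X Y W) - act W (η X Y Z)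
        - η ⁅X, Y⁆ Z W + η ⁅X, Z⁆ Y W - η ⁅X, W⁆ Y Z
        - η ⁅Y, Z⁆ X W + η ⁅Y, W⁆ X Z - η ⁅Z, W⁆ X Y = 0)
    (e₁ e₂ e₃ : V × (V → R) × K) (h₁ : ∀ X Y, e₁.2.1 (X + Y) = e₁.2.1 X + e₁.2.1 Y)
    (h₂ : ∀ X Y, e₂.2.1 (X + Y) = e₂.2.1 X + e₂.2.1 Y)
    (h₃ : ∀ X Y, e₃.2.1 (X + Y) = e₃.2.1 X + e₃.2.1 Y) :
    bracket act LK PK η e₁ (bracket act LK PK η e₂ e₃)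
      = bracket act LK PK η (bracket act LK PK η e₁ e₂) e₃
        + bracket act LK PK η e₂ (bracket act LK PK η e₁ e₃) := by
  refine Prod.ext (leibniz_lie e₁.1 e₂.1 e₃.1)
    (Prod.ext ?_ (semidirectBracket_leibniz hLKadd hLKbr hLKcomm ..))
  simp only [bracket, Prod.snd_add, Prod.fst_add, twistedDorfmanForm_add_left hactadd',
    twistedDorfmanForm_add_right hactadd']
  linear_combination twistedDorfmanForm_leibniz hactadd' hactbr hηalt1 hηalt2 hηclosed h₁ h₂ h₃
      e₁.1 e₂.1 e₃.1
    + pairingDiff_leibniz hLKadd hLKbr hLKcomm hPKsymm hPKadd hPKinv hPKL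
      e₁.1 e₂.1 e₃.1 e₁.2.2 e₂.2.2 e₃.2.2

theorem bracket_smul_right [Module R V] [Module R K]
    (hactsmul : ∀ (f : R) X g, act (f • X) g = f * act X g)
    (hactLeib : ∀ X f g, act X (f * g) = f * act X g + g * act X f)
    (hVmod : ∀ (X : V) (f : R) (Y : V), ⁅X, f • Y⁆ = f • ⁅X, Y⁆ + (act X f) • Y)
    (hKbr : ∀ (f : R) (w w' : K), ⁅f • w, w'⁆ = f • ⁅w, w'⁆)
    (hLKf : ∀ (X : V) (f : R) (w : K), LK X (f • w) = f • LK X w + (act X f) • w)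
    (hLKten : ∀ (f : R) (X : V) (w : K), LK (f • X) w = f • LK X w)
    (hPKsymm : ∀ w w', PK w w' = PK w' w)
    (hPKsmul : ∀ (f : R) w w', PK (f • w) w' = f * PK w w')
    (hηalt1 : ∀ X Y Z, η X Y Z = - η Y X Z)
    (hηsmul : ∀ (f : R) X Y Z, η (f • X) Y Z = f * η X Y Z)
    (f : R) (e₁ e₂ : V × (V → R) × K) (h₁ : IsLinearMap R e₁.2.1) :
    bracket act LK PK η e₁ (f • e₂)
      = f • bracket act LK PK η e₁ e₂ + act e₁.1 f • e₂ := by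
  have hsmul_lie (A B : V) : ⁅f • A, B⁆ = f • ⁅A, B⁆ - act B f • A := by
    rw [← lie_skew, hVmod, ← lie_skew A B]
    module
  have hlie_smul (a b : K) : ⁅a, f • b⁆ = f • ⁅a, b⁆ := by
    rw [← lie_skew, hKbr, ← lie_skew b a]
    module
  have hη_smul_mid (A B C : V) : η A (f • B) C = f * η A B C := by
    rw [hηalt1, hηsmul, hηalt1 B]
    ring
  refine Prod.ext (hVmod e₁.1 f e₂.1) (Prod.ext ?_ ?_)
  · funext Z
    simp only [bracket, twistedDorfmanForm, lieDerivForm, interiorDiffForm, pairingDiff,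
      Prod.smul_fst, Prod.smul_snd, Prod.fst_add, Prod.snd_add, Pi.add_apply, Pi.sub_apply,
      Pi.smul_apply, smul_eq_mul, hsmul_lie, hVmod, map_sub_of_map_add h₁.map_add,
      h₁.map_smul, hactsmul, hactLeib, hη_smul_mid, hPKsymm (LK Z e₁.2.2), hPKsmul]
    ring
  · simp only [bracket, semidirectBracket, Prod.smul_fst, Prod.smul_snd, Prod.snd_add,
      hLKf, hLKten, hlie_smul, smul_add, smul_sub]
    abel

theorem act_pairing
    (hactadd' : ∀ X f g, act X (f + g) = act X f + act X g)
    (hPKsymm : ∀ w w', PK w w' = PK w' w)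
    (hPKadd : ∀ w w₁ w₂, PK w (w₁ + w₂) = PK w w₁ + PK w w₂)
    (hPKinv : ∀ w w₁ w₂ : K, PK ⁅w, w₁⁆ w₂ + PK w₁ ⁅w, w₂⁆ = 0)
    (hPKL : ∀ X w w', act X (PK w w') = PK (LK X w) w' + PK w (LK X w'))
    (hηalt2 : ∀ X Y Z, η X Y Z = - η X Z Y)
    (e₁ e₂ e₃ : V × (V → R) × K) (h₁ : ∀ X Y, e₁.2.1 (X + Y) = e₁.2.1 X + e₁.2.1 Y) :
    act e₁.1 (pairing PK e₂ e₃)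
      = pairing PK (bracket act LK PK η e₁ e₂) e₃
        + pairing PK e₂ (bracket act LK PK η e₁ e₃) := by
  simp only [pairing, bracket, twistedDorfmanForm, lieDerivForm, interiorDiffForm, pairingDiff,
    semidirectBracket, Pi.add_apply, Pi.sub_apply, hactadd', hPKL, hPKadd,
    map_sub_of_map_add (hPKadd _), add_left_of_symm hPKsymm hPKadd,
    sub_left_of_symm hPKsymm hPKadd, apply_lie_eq_apply_lie_of_invariant hPKsymm hPKadd hPKinv]
  rw [← lie_skew e₂.1 e₃.1, map_neg_of_map_add h₁, ← lie_skew e₁.2.2 e₂.2.2,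
    neg_left_of_symm hPKsymm hPKadd]
  linear_combination -hηalt2 e₁.1 e₃.1 e₂.1 + hPKsymm e₂.2.2 (LK e₃.1 e₁.2.2)

theorem bracket_add_bracket_swap
    (hactadd' : ∀ X f g, act X (f + g) = act X f + act X g)
    (hPKsymm : ∀ w w', PK w w' = PK w' w)
    (hPKL : ∀ X w w', act X (PK w w') = PK (LK X w) w' + PK w (LK X w'))
    (hηalt1 : ∀ X Y Z, η X Y Z = - η Y X Z) (e₁ e₂ : V × (V → R) × K) :
    bracket act LK PK η e₁ e₂ + bracket act LK PK η e₂ e₁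
      = (0, fun Z => act Z (pairing PK e₁ e₂), 0) := by
  refine Prod.ext ?_ (Prod.ext ?_ ?_)
  · simp only [bracket, Prod.fst_add, ← lie_skew e₂.1 e₁.1]
    exact add_neg_cancel _
  · funext Z
    simp only [bracket, twistedDorfmanForm, lieDerivForm, interiorDiffForm, pairingDiff, pairing,
      Prod.snd_add, Prod.fst_add, Pi.add_apply, Pi.sub_apply, hactadd', hPKL]
    linear_combination hηalt1 e₁.1 e₂.1 Z + hPKsymm e₂.2.2 (LK Z e₁.2.2)
      + hPKsymm (LK Z e₂.2.2) e₁.2.2 + hPKsymm (LK Z e₁.2.2) e₂.2.2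
  · simp only [bracket, semidirectBracket, Prod.snd_add, ← lie_skew e₁.2.2 e₂.2.2]
    abel

theorem pairing_zero_one_zero (hPKadd : ∀ w w₁ w₂, PK w (w₁ + w₂) = PK w w₁ + PK w w₂)
    (e : V × (V → R) × K) (h : ∀ X Y, e.2.1 (X + Y) = e.2.1 X + e.2.1 Y) :
    pairing PK e (0, 1, 0) = 1 := by
  have hα0 : e.2.1 0 = 0 := map_zero (AddMonoidHom.mk' _ h)
  have hPK0 : PK e.2.2 0 = 0 := map_zero (AddMonoidHom.mk' _ (hPKadd e.2.2))
  simp only [pairing, Pi.one_apply, hα0, hPK0, zero_add, add_zero]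

end ProductCourant

open ProductCourant

theorem stmt13_general
    (R : Type) [CommRing R] [Nontrivial R]
    (V : Type) [LieRing V] [Module R V]
    (act : V → R → R)
    (hactsmul : ∀ (f : R) X g, act (f • X) g = f * act X g)
    (hactadd' : ∀ X f g, act X (f + g) = act X f + act X g)
    (hactLeib : ∀ X f g, act X (f * g) = f * act X g + g * act X f)
    (hactbr : ∀ (X Y : V) (f : R), act ⁅X, Y⁆ f = act X (act Y f) - act Y (act X f))
    (hVmod : ∀ (X : V) (f : R) (Y : V), ⁅X, f • Y⁆ = f • ⁅X, Y⁆ + (act X f) • Y)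
    (K : Type) [LieRing K] [Module R K]
    (hKbr : ∀ (f : R) (w w' : K), ⁅f • w, w'⁆ = f • ⁅w, w'⁆)
    (LK : V → K → K)
    (hLKadd : ∀ X w w', LK X (w + w') = LK X w + LK X w')
    (hLKf : ∀ (X : V) (f : R) (w : K), LK X (f • w) = f • LK X w + (act X f) • w)
    (hLKten : ∀ (f : R) (X : V) (w : K), LK (f • X) w = f • LK X w)
    (hLKbr : ∀ (X : V) (w w' : K), LK X ⁅w, w'⁆ = ⁅LK X w, w'⁆ + ⁅w, LK X w'⁆)
    (hLKcomm : ∀ (X Y : V) (w : K), LK ⁅X, Y⁆ w = LK X (LK Y w) - LK Y (LK X w))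
    (PK : K → K → R)
    (hPKsymm : ∀ w w', PK w w' = PK w' w)
    (hPKadd : ∀ w w₁ w₂, PK w (w₁ + w₂) = PK w w₁ + PK w w₂)
    (hPKsmul : ∀ (f : R) w w', PK (f • w) w' = f * PK w w')
    (hPKinv : ∀ w w₁ w₂ : K, PK ⁅w, w₁⁆ w₂ + PK w₁ ⁅w, w₂⁆ = 0)
    (hPKL : ∀ X w w', act X (PK w w') = PK (LK X w) w' + PK w (LK X w'))
    (η : V → V → V → R)
    (hηalt1 : ∀ X Y Z, η X Y Z = - η Y X Z)
    (hηalt2 : ∀ X Y Z, η X Y Z = - η X Z Y)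
    (hηsmul : ∀ (f : R) X Y Z, η (f • X) Y Z = f * η X Y Z)
    (hηclosed : ∀ X Y Z W,
      act X (η Y Z W) - act Y (η X Z W) + act Z (η X Y W) - act W (η X Y Z)
        - η ⁅X, Y⁆ Z W + η ⁅X, Z⁆ Y W - η ⁅X, W⁆ Y Z
        - η ⁅Y, Z⁆ X W + η ⁅Y, W⁆ X Z - η ⁅Z, W⁆ X Y = 0) :
    -- the Courant algebroid E = 𝕋_η N × 𝔨
    let E := V × (V → R) × K
    let anc : E → V := fun e => e.1
    let P : E → E → R := fun e e' => e.2.1 e'.1 + e'.2.1 e.1 + PK e.2.2 e'.2.2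
    let br : E → E → E := fun e e' =>
      (⁅e.1, e'.1⁆,
       fun Z => (act e.1 (e'.2.1 Z) - e'.2.1 ⁅e.1, Z⁆)
         - (act e'.1 (e.2.1 Z) - act Z (e.2.1 e'.1) - e.2.1 ⁅e'.1, Z⁆)
         + η e.1 e'.1 Z + PK (LK Z e.2.2) e'.2.2,
       LK e.1 e'.2.2 - LK e'.1 e.2.2 + ⁅e.2.2, e'.2.2⁆)
    let smulE : R → E → E := fun f e => (f • e.1, fun Z => f * e.2.1 Z, f • e.2.2)
    let Dop : R → E := fun f => (0, fun Z => act Z f, 0)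
    let islin : (V → R) → Prop := fun α =>
      (∀ X Y, α (X + Y) = α X + α Y) ∧ ∀ (f : R) (X : V), α (f • X) = f * α X
    -- Leibniz rule
    (∀ (f : R) (e₁ e₂ : E), islin e₁.2.1 → islin e₂.2.1 →
        br e₁ (smulE f e₂) = smulE f (br e₁ e₂) + smulE (act e₁.1 f) e₂) ∧
    -- Jacobi identity (Leibniz form)
    (∀ e₁ e₂ e₃ : E, islin e₁.2.1 → islin e₂.2.1 → islin e₃.2.1 →
        br e₁ (br e₂ e₃) = br (br e₁ e₂) e₃ + br e₂ (br e₁ e₃)) ∧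
    -- invariance of the pairing
    (∀ e₁ e₂ e₃ : E, islin e₁.2.1 → islin e₂.2.1 → islin e₃.2.1 →
        act (anc e₁) (P e₂ e₃) = P (br e₁ e₂) e₃ + P e₂ (br e₁ e₃)) ∧
    -- anchor compatibility
    (∀ e₁ e₂ : E, anc (br e₁ e₂) = ⁅anc e₁, anc e₂⁆) ∧
    -- symmetrization:  ⟦e₁,e₂⟧ + ⟦e₂,e₁⟧ = 𝒟⟨e₁,e₂⟩
    (∀ e₁ e₂ : E, islin e₁.2.1 → islin e₂.2.1 →
        br e₁ e₂ + br e₂ e₁ = Dop (P e₁ e₂)) ∧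
    -- nondegeneracy of the pairing
    (∀ e : E, islin e.2.1 → (∀ e' : E, P e e' = 0) → e = 0) := by
  intro E anc P br smulE Dop islin
  refine ⟨?_, ?_, ?_, fun _ _ => rfl, ?_, ?_⟩
  · rintro f e₁ e₂ h₁ -
    exact bracket_smul_right hactsmul hactLeib hVmod hKbr hLKf hLKten hPKsymm hPKsmul hηalt1
      hηsmul f e₁ e₂ ⟨h₁.1, h₁.2⟩
  · rintro e₁ e₂ e₃ ⟨h₁, -⟩ ⟨h₂, -⟩ ⟨h₃, -⟩
    exact bracket_leibniz hactadd' hactbr hLKadd hLKbr hLKcomm hPKsymm hPKadd hPKinv hPKL hηalt1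
      hηalt2 hηclosed e₁ e₂ e₃ h₁ h₂ h₃
  · rintro e₁ e₂ e₃ ⟨h₁, -⟩ - -
    exact act_pairing hactadd' hPKsymm hPKadd hPKinv hPKL hηalt2 e₁ e₂ e₃ h₁
  · intro e₁ e₂ _ _
    exact bracket_add_bracket_swap hactadd' hPKsymm hPKL hηalt1 e₁ e₂
  · rintro e ⟨h, -⟩ hP
    exact absurd ((hP (0, 1, 0)).symm.trans (pairing_zero_one_zero hPKadd e h)) zero_ne_one

/-- The product 𝕋_η N × 𝔨 of the η-twisted standard Courant
algebroid with a quadratic Lie algebra 𝔨 is a Courant algebroid.  Geometry is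
presented algebraically: R is the algebra of functions, V the Lie algebra of
vector fields acting on R by derivations (`act`), 1-forms are functions
V → R (with `islin` singling out the R-linear ones), K is the module of
𝔨-valued functions with Lie derivative LK and pointwise pairing PK, and η is a
closed 3-form.  The conclusion lists the five Courant algebroid axioms and
nondegeneracy of the pairing for the bundle E = V × (V → R) × K with the
bracket (prodcour) and pairing (prodpair). -/
theorem stmt13
    (R : Type) [CommRing R] [Algebra ℝ R] [Nontrivial R]
    (V : Type) [LieRing V] [Module R V]
    (act : V → R → R)
    (hactadd : ∀ X Y f, act (X + Y) f = act X f + act Y f)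
    (hactsmul : ∀ (f : R) X g, act (f • X) g = f * act X g)
    (hactadd' : ∀ X f g, act X (f + g) = act X f + act X g)
    (hactLeib : ∀ X f g, act X (f * g) = f * act X g + g * act X f)
    (hactbr : ∀ (X Y : V) (f : R), act ⁅X, Y⁆ f = act X (act Y f) - act Y (act X f))
    (hVmod : ∀ (X : V) (f : R) (Y : V), ⁅X, f • Y⁆ = f • ⁅X, Y⁆ + (act X f) • Y)
    (K : Type) [LieRing K] [Module R K]
    (hKbr : ∀ (f : R) (w w' : K), ⁅f • w, w'⁆ = f • ⁅w, w'⁆)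
    (LK : V → K → K)
    (hLKadd : ∀ X w w', LK X (w + w') = LK X w + LK X w')
    (hLKadd2 : ∀ X Y w, LK (X + Y) w = LK X w + LK Y w)
    (hLKf : ∀ (X : V) (f : R) (w : K), LK X (f • w) = f • LK X w + (act X f) • w)
    (hLKten : ∀ (f : R) (X : V) (w : K), LK (f • X) w = f • LK X w)
    (hLKbr : ∀ (X : V) (w w' : K), LK X ⁅w, w'⁆ = ⁅LK X w, w'⁆ + ⁅w, LK X w'⁆)
    (hLKcomm : ∀ (X Y : V) (w : K), LK ⁅X, Y⁆ w = LK X (LK Y w) - LK Y (LK X w))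
    (PK : K → K → R)
    (hPKsymm : ∀ w w', PK w w' = PK w' w)
    (hPKadd : ∀ w w₁ w₂, PK w (w₁ + w₂) = PK w w₁ + PK w w₂)
    (hPKsmul : ∀ (f : R) w w', PK (f • w) w' = f * PK w w')
    (hPKnd : ∀ w, (∀ w', PK w w' = 0) → w = 0)
    (hPKinv : ∀ w w₁ w₂ : K, PK ⁅w, w₁⁆ w₂ + PK w₁ ⁅w, w₂⁆ = 0)
    (hPKL : ∀ X w w', act X (PK w w') = PK (LK X w) w' + PK w (LK X w'))
    (η : V → V → V → R)
    (hηalt1 : ∀ X Y Z, η X Y Z = - η Y X Z)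
    (hηalt2 : ∀ X Y Z, η X Y Z = - η X Z Y)
    (hηadd : ∀ X X' Y Z, η (X + X') Y Z = η X Y Z + η X' Y Z)
    (hηsmul : ∀ (f : R) X Y Z, η (f • X) Y Z = f * η X Y Z)
    (hηclosed : ∀ X Y Z W,
      act X (η Y Z W) - act Y (η X Z W) + act Z (η X Y W) - act W (η X Y Z)
        - η ⁅X, Y⁆ Z W + η ⁅X, Z⁆ Y W - η ⁅X, W⁆ Y Z
        - η ⁅Y, Z⁆ X W + η ⁅Y, W⁆ X Z - η ⁅Z, W⁆ X Y = 0) :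
    -- the Courant algebroid E = 𝕋_η N × 𝔨
    let E := V × (V → R) × K
    let anc : E → V := fun e => e.1
    let P : E → E → R := fun e e' => e.2.1 e'.1 + e'.2.1 e.1 + PK e.2.2 e'.2.2
    let br : E → E → E := fun e e' =>
      (⁅e.1, e'.1⁆,
       fun Z => (act e.1 (e'.2.1 Z) - e'.2.1 ⁅e.1, Z⁆)
         - (act e'.1 (e.2.1 Z) - act Z (e.2.1 e'.1) - e.2.1 ⁅e'.1, Z⁆)
         + η e.1 e'.1 Z + PK (LK Z e.2.2) e'.2.2,
       LK e.1 e'.2.2 - LK e'.1 e.2.2 + ⁅e.2.2, e'.2.2⁆)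
    let smulE : R → E → E := fun f e => (f • e.1, fun Z => f * e.2.1 Z, f • e.2.2)
    let Dop : R → E := fun f => (0, fun Z => act Z f, 0)
    let islin : (V → R) → Prop := fun α =>
      (∀ X Y, α (X + Y) = α X + α Y) ∧ ∀ (f : R) (X : V), α (f • X) = f * α X
    -- Leibniz rule
    (∀ (f : R) (e₁ e₂ : E), islin e₁.2.1 → islin e₂.2.1 →
        br e₁ (smulE f e₂) = smulE f (br e₁ e₂) + smulE (act e₁.1 f) e₂) ∧
    -- Jacobi identity (Leibniz form)
    (∀ e₁ e₂ e₃ : E, islin e₁.2.1 → islin e₂.2.1 → islin e₃.2.1 →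
        br e₁ (br e₂ e₃) = br (br e₁ e₂) e₃ + br e₂ (br e₁ e₃)) ∧
    -- invariance of the pairing
    (∀ e₁ e₂ e₃ : E, islin e₁.2.1 → islin e₂.2.1 → islin e₃.2.1 →
        act (anc e₁) (P e₂ e₃) = P (br e₁ e₂) e₃ + P e₂ (br e₁ e₃)) ∧
    -- anchor compatibility
    (∀ e₁ e₂ : E, anc (br e₁ e₂) = ⁅anc e₁, anc e₂⁆) ∧
    -- symmetrization:  ⟦e₁,e₂⟧ + ⟦e₂,e₁⟧ = 𝒟⟨e₁,e₂⟩
    (∀ e₁ e₂ : E, islin e₁.2.1 → islin e₂.2.1 →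
        br e₁ e₂ + br e₂ e₁ = Dop (P e₁ e₂)) ∧
    -- nondegeneracy of the pairing
    (∀ e : E, islin e.2.1 → (∀ e' : E, P e e' = 0) → e = 0) :=
  stmt13_general R V act hactsmul hactadd' hactLeib hactbr hVmod K hKbr LK hLKadd hLKf hLKten hLKbr
    hLKcomm PK hPKsymm hPKadd hPKsmul hPKinv hPKL η hηalt1 hηalt2 hηsmul hηclosed
end
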